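/- arXiv:1808.01581 — 5 statements merged into one kernel-verified Lean document; each statement's English description precedes it below -/
import Mathlib

section
/- Let n ≥ 2, p > 1, and suppose v ∈ C^2([0,∞)) satisfies v(r) ≥ c r² for all r ≥ r₀ (for some c > 0, r₀ > 0), and w ∈ C^2([0,∞)) satisfies -(1/r^{n-1})(r^{n-1} w'(r))' ≥ C₁ r^{-a} v(r)^p for all r > 0, where 0 ≤ a ≤ 2 + 2p and C₁ > 0. If additionally r^{n-1} w'(r) → 0 as r → 0, then w(r) → -∞ as r → ∞. In particular w cannot be nonnegative on [0,∞). -/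
/-!
Write `φ(r) = r^(n-1) w'(r)`. For `r ≥ max r₀ 1`, `v^p ≥ c^p r^(2p)` and `a ≤ 2 + 2p` turn the
inequality into `φ'(r) ≤ -C₁ c^p r^(n-3)`. With `ε = C₁ c^p / (n-1)`, the function `φ + ε r^(n-2)`
then has derivative at most `-ε / r`, so it tends to `-∞` like `-ε log r`. Hence eventually
`φ(r) ≤ -ε r^(n-2)`, i.e. `w'(r) ≤ -ε / r`, and `w` tends to `-∞` like `-ε log r`. Bounding
everything by `1 / r` avoids separating the cases `a < 2 + 2p` and `a = 2 + 2p`.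
-/

open Filter Set Topology Real

lemma antitoneOn_add_of_deriv_le_neg {f g g' : ℝ → ℝ} {s : Set ℝ} (hs : Convex ℝ s)
    (hg : ∀ x ∈ s, HasDerivAt g (g' x) x) (hg' : ∀ x ∈ s, 0 < g' x)
    (hf : ∀ x ∈ s, deriv f x ≤ -g' x) : AntitoneOn (fun x => f x + g x) s := by
  have hfd : ∀ x ∈ s, DifferentiableAt ℝ f x := fun x hx =>
    differentiableAt_of_deriv_ne_zero (by linarith [hf x hx, hg' x hx])
  have hfg : ∀ x ∈ s, DifferentiableAt ℝ (fun x => f x + g x) x := fun x hx =>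
    (hfd x hx).add (hg x hx).differentiableAt
  refine antitoneOn_of_deriv_nonpos hs (fun x hx => (hfg x hx).continuousAt.continuousWithinAt)
    (fun x hx => (hfg x (interior_subset hx)).differentiableWithinAt) fun x hx => ?_
  have hx := interior_subset hx
  rw [deriv_fun_add (hfd x hx) (hg x hx).differentiableAt, (hg x hx).deriv]
  linarith [hf x hx]

lemma tendsto_atBot_of_deriv_le_neg_div {f : ℝ → ℝ} {c : ℝ} (hc : 0 < c)
    (hf : ∀ᶠ x in atTop, deriv f x ≤ -c / x) : Tendsto f atTop atBot := by
  obtain ⟨R, hR⟩ := eventually_atTop.mp (hf.and (eventually_gt_atTop 0))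
  have hanti : AntitoneOn (fun x => f x + c * log x) (Ici R) :=
    antitoneOn_add_of_deriv_le_neg (convex_Ici R)
      (fun x hx => (hasDerivAt_log (hR x hx).2.ne').const_mul c)
      (fun x hx => mul_pos hc (inv_pos.mpr (hR x hx).2))
      (fun x hx => by simpa only [div_eq_mul_inv, neg_mul] using (hR x hx).1)
  have hbound : ∀ᶠ x in atTop, f x ≤ (f R + c * log R) - c * log x :=
    eventually_atTop.mpr ⟨R, fun x hx => by linarith [hanti self_mem_Ici hx hx]⟩
  exact tendsto_atBot_mono' atTop hbound <| tendsto_atBot_add_const_left _ _ <|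
    tendsto_neg_atTop_atBot.comp (tendsto_log_atTop.const_mul_atTop hc)

lemma eventually_le_neg_mul_rpow_of_deriv_le {φ : ℝ → ℝ} {B m : ℝ} (hB : 0 < B) (hm : 0 ≤ m)
    (hφ : ∀ᶠ r in atTop, deriv φ r ≤ -B * r ^ (m - 1)) :
    ∃ ε > 0, ∀ᶠ r in atTop, φ r ≤ -ε * r ^ m := by
  set ε := B / (m + 1)
  have hε : 0 < ε := by positivity
  have hF : ∀ᶠ r in atTop, deriv (fun r => φ r + ε * r ^ m) r ≤ -ε / r := by
    filter_upwards [hφ, eventually_ge_atTop 1] with r hr hr1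
    have hr0 : 0 < r := one_pos.trans_le hr1
    have hpow : HasDerivAt (fun r => ε * r ^ m) (ε * (m * r ^ (m - 1))) r :=
      (hasDerivAt_rpow_const (Or.inl hr0.ne')).const_mul ε
    have hφd : DifferentiableAt ℝ φ r :=
      differentiableAt_of_deriv_ne_zero (by nlinarith [rpow_pos_of_pos hr0 (m - 1)])
    have hinv : r⁻¹ ≤ r ^ (m - 1) := by
      simpa only [rpow_neg_one] using rpow_le_rpow_of_exponent_le hr1 (by linarith : -1 ≤ m - 1)
    have hεm : B - ε * m = ε := by simp only [ε]; field_simp; ring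
    calc deriv (fun r => φ r + ε * r ^ m) r = deriv φ r + ε * (m * r ^ (m - 1)) := by
          rw [deriv_fun_add hφd hpow.differentiableAt, hpow.deriv]
      _ ≤ -(B - ε * m) * r ^ (m - 1) := by linarith
      _ ≤ -ε / r := by
          rw [hεm, neg_mul, neg_div, neg_le_neg_iff, div_eq_mul_inv]
          exact mul_le_mul_of_nonneg_left hinv hε.le
  refine ⟨ε, hε, ?_⟩
  filter_upwards [(tendsto_atBot_of_deriv_le_neg_div hε hF).eventually (eventually_le_atBot 0)]
    with r hr
  linarith

lemma mul_rpow_neg_two_le_rpow_neg_mul_rpow {p a c r x : ℝ} (hp : 0 ≤ p) (hc : 0 ≤ c)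
    (ha : a ≤ 2 + 2 * p) (hr : 1 ≤ r) (hx : c * r ^ 2 ≤ x) :
    c ^ p * r ^ (-2 : ℝ) ≤ r ^ (-a) * x ^ p := by
  have hr0 : 0 < r := one_pos.trans_le hr
  calc c ^ p * r ^ (-2 : ℝ) ≤ c ^ p * r ^ (-a + 2 * p) :=
        mul_le_mul_of_nonneg_left (rpow_le_rpow_of_exponent_le hr (by linarith)) (by positivity)
    _ = r ^ (-a) * (c * r ^ 2) ^ p := by
        rw [rpow_add hr0, mul_rpow hc (by positivity), ← rpow_natCast, ← rpow_mul hr0.le]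
        push_cast
        ring
    _ ≤ r ^ (-a) * x ^ p := by gcongr

lemma eventually_deriv_le_neg_mul_rpow_of_radial_ineq {k : ℕ} {p a c C₁ r₀ : ℝ} {v Φ : ℝ → ℝ}
    (hp : 0 ≤ p) (hc : 0 ≤ c) (hC₁ : 0 ≤ C₁) (ha : a ≤ 2 + 2 * p)
    (hvlb : ∀ r ≥ r₀, c * r ^ 2 ≤ v r)
    (hineq : ∀ r > (0 : ℝ), C₁ * r ^ (-a) * v r ^ p ≤ -(1 / r ^ k) * deriv Φ r) :
    ∀ᶠ r in atTop, deriv Φ r ≤ -(C₁ * c ^ p) * r ^ ((k : ℝ) - 2) := by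
  filter_upwards [eventually_ge_atTop (max r₀ 1)] with r hr
  have hr1 : 1 ≤ r := le_of_max_le_right hr
  have hr0 : 0 < r := one_pos.trans_le hr1
  have hsrc := mul_rpow_neg_two_le_rpow_neg_mul_rpow hp hc ha hr1 (hvlb r (le_of_max_le_left hr))
  have hineq' := hineq r hr0
  rw [neg_mul, one_div_mul_eq_div, le_neg, div_le_iff₀ (by positivity)] at hineq'
  rw [sub_eq_add_neg, rpow_add hr0, rpow_natCast]
  nlinarith [pow_pos hr0 k, mul_le_mul_of_nonneg_left hsrc hC₁]

theorem radial_double_integration_divergence_general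
    (n : ℕ) (hn : 2 ≤ n) (p a c C₁ r₀ : ℝ) (hp : 1 < p) (hc : 0 < c)
    (ha1 : a ≤ 2 + 2 * p) (hC₁ : 0 < C₁)
    (v w : ℝ → ℝ)
    (hvlb : ∀ r ≥ r₀, c * r ^ 2 ≤ v r)
    (hineq : ∀ r > (0 : ℝ),
      C₁ * r ^ (-a) * v r ^ p ≤
        -(1 / r ^ (n - 1)) * deriv (fun s => s ^ (n - 1) * deriv w s) r) :
    Tendsto w atTop atBot ∧ ¬ (∀ r ≥ (0 : ℝ), 0 ≤ w r) := by
  have hpow : ∀ r : ℝ, r ^ (n - 1) = r ^ ((n - 2 : ℕ) : ℝ) * r := fun r => by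
    rw [rpow_natCast, ← pow_succ]; congr 1; omega
  have hflux := eventually_deriv_le_neg_mul_rpow_of_radial_ineq (by linarith) hc.le hC₁.le ha1
    hvlb hineq
  have hexp : ((n - 1 : ℕ) : ℝ) - 2 = ((n - 2 : ℕ) : ℝ) - 1 := by
    rw [show n - 1 = n - 2 + 1 by omega]; push_cast; ring
  rw [hexp] at hflux
  obtain ⟨ε, hε, hφ⟩ :=
    eventually_le_neg_mul_rpow_of_deriv_le (by positivity) (Nat.cast_nonneg _) hflux
  have hw' : ∀ᶠ r in atTop, deriv w r ≤ -ε / r := by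
    filter_upwards [hφ, eventually_gt_atTop 0] with r hr hr0
    rw [hpow, mul_assoc, mul_comm r] at hr
    rw [le_div_iff₀ hr0]
    nlinarith [rpow_pos_of_pos hr0 ((n - 2 : ℕ) : ℝ)]
  have htend := tendsto_atBot_of_deriv_le_neg_div hε hw'
  refine ⟨htend, fun hnonneg => ?_⟩
  obtain ⟨r, hr, hr0⟩ := ((htend.eventually_lt_atBot 0).and (eventually_ge_atTop 0)).exists
  exact (hnonneg r hr0).not_gt hr

theorem radial_double_integration_divergence
    (n : ℕ) (hn : 2 ≤ n) (p a c C₁ r₀ : ℝ) (hp : 1 < p) (hc : 0 < c) (hr₀ : 0 < r₀)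
    (ha0 : 0 ≤ a) (ha1 : a ≤ 2 + 2 * p) (hC₁ : 0 < C₁)
    (v w : ℝ → ℝ)
    (hv : ContDiffOn ℝ 2 v (Ici 0)) (hw : ContDiffOn ℝ 2 w (Ici 0))
    (hvlb : ∀ r ≥ r₀, c * r ^ 2 ≤ v r)
    (hineq : ∀ r > (0 : ℝ),
      C₁ * r ^ (-a) * v r ^ p ≤
        -(1 / r ^ (n - 1)) * deriv (fun s => s ^ (n - 1) * deriv w s) r)
    (hlim : Tendsto (fun r => r ^ (n - 1) * deriv w r) (𝓝[>] 0) (𝓝 0)) :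
    Tendsto w atTop atBot ∧ ¬ (∀ r ≥ (0 : ℝ), 0 ≤ w r) :=
  radial_double_integration_divergence_general n hn p a c C₁ r₀ hp hc ha1 hC₁ v w hvlb hineq
end

section
/- Let n ≥ 2, p > 1, α₀ ≥ max{1, 2n/p}, C₀ ∈ (0,1], and suppose that for every k ∈ ℕ there are numbers l_k > 0, α_k > 0 defined by α_{k+1} = 2 α_k p and l_{k+1} = C₀ l_k^p / (2 α_k p)^n. Then l_k ≥ (2p)^{nk/(p-1)} · [ C₀^{1/(p-1)} l₀ / ( (2p)^{np/(p-1)²} α₀^{n/(p-1)} ) ]^{p^k} for all k ≥ 0. In particular, if l₀ = 2 C₀^{-1/(p-1)} (2p)^{np/(p-1)²} α₀^{n/(p-1)}, then l_k ≥ (2p)^{nk/(p-1)} 2^{p^k} → ∞ as k → ∞. -/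
/-!
Taking logarithms turns the recursion into the affine recurrence
`u (k+1) = p u k + log C₀ - n log α₀ - n (k+1) log (2p)` for `u k = log (l k)`, since
`α k = (2p)^k α₀`. It has the particular solution `κ + n k log (2p) / (p - 1)` with the constant
`κ = iterationOffset n p C₀ α₀`, so `log (l k) = κ + n k log (2p) / (p - 1) + p^k (log (l 0) - κ)`.
Exponentiating gives `l k = (2p)^(n k / (p - 1)) A^(p^k) e^κ` with the amplitude `A` of the
statement, and `κ ≥ 0` because `α₀ ≥ 1` and `C₀ ≤ 1`. The choice of `l 0` in the second part
makes `A = 2`.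
-/

open Filter Real

theorem sub_eq_pow_mul_sub_of_affine_recurrence {R : Type*} [CommRing R] {p : R} {f u w : ℕ → R}
    (hu : ∀ k, u (k + 1) = p * u k + f k) (hw : ∀ k, w (k + 1) = p * w k + f k) (k : ℕ) :
    u k - w k = p ^ k * (u 0 - w 0) := by
  induction k with
  | zero => simp
  | succ k ih => rw [hu, hw, pow_succ', mul_assoc, ← ih]; ring

theorem eq_pow_mul_of_succ_eq_mul {M : Type*} [Monoid M] {r : M} {a : ℕ → M}
    (h : ∀ k, a (k + 1) = r * a k) (k : ℕ) : a k = r ^ k * a 0 := by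
  induction k with
  | zero => simp
  | succ k ih => rw [h, ih, pow_succ', mul_assoc]

noncomputable def iterationOffset (n : ℕ) (p C₀ α₀ : ℝ) : ℝ :=
  (n * p / (p - 1) * log (2 * p) + n * log α₀ - log C₀) / (p - 1)

noncomputable def iterationAmplitude (n : ℕ) (p C₀ α₀ l₀ : ℝ) : ℝ :=
  C₀ ^ (1 / (p - 1)) * l₀ / ((2 * p) ^ ((n : ℝ) * p / (p - 1) ^ 2) * α₀ ^ ((n : ℝ) / (p - 1)))

section IterationSequence

variable {n : ℕ} {p C₀ α₀ l₀ : ℝ} {l α : ℕ → ℝ}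

theorem iterationOffset_nonneg (hp : 1 < p) (hC₀ : 0 ≤ C₀) (hC₀' : C₀ ≤ 1) (hα₀ : 1 ≤ α₀) :
    0 ≤ iterationOffset n p C₀ α₀ := by
  have hq : 0 < p - 1 := by linarith
  have h2p : 0 ≤ log (2 * p) := log_nonneg (by linarith)
  have : 0 ≤ (n : ℝ) * log α₀ := mul_nonneg n.cast_nonneg (log_nonneg hα₀)
  have : 0 ≤ n * p / (p - 1) * log (2 * p) := by positivity
  exact div_nonneg (by linarith [log_nonpos hC₀ hC₀']) hq.le

theorem iterationAmplitude_pos (hp : 1 < p) (hC₀ : 0 < C₀) (hα₀ : 0 < α₀) (hl₀ : 0 < l₀) :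
    0 < iterationAmplitude n p C₀ α₀ l₀ := by
  have h2p : 0 < 2 * p := by linarith
  unfold iterationAmplitude
  positivity

theorem log_iterationAmplitude (hp : 1 < p) (hC₀ : 0 < C₀) (hα₀ : 0 < α₀) (hl₀ : 0 < l₀) :
    log (iterationAmplitude n p C₀ α₀ l₀) = log l₀ - iterationOffset n p C₀ α₀ := by
  have h2p : 0 < 2 * p := by linarith
  have hq : p - 1 ≠ 0 := by linarith
  rw [iterationAmplitude, iterationOffset, log_div (by positivity) (by positivity),
    log_mul (by positivity) hl₀.ne', log_mul (by positivity) (by positivity),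
    log_rpow hC₀, log_rpow h2p, log_rpow hα₀]
  field_simp
  ring

theorem log_succ_eq_of_recurrence (hp : 0 < p) (hC₀ : 0 < C₀) (hα₀ : 0 < α 0)
    (hl : ∀ k, 0 < l k)
    (hαrec : ∀ k, α (k + 1) = 2 * α k * p)
    (hlrec : ∀ k, l (k + 1) = C₀ * l k ^ p / (2 * α k * p) ^ n) (k : ℕ) :
    log (l (k + 1)) = p * log (l k) + (log C₀ - n * log (α 0) - n * (k + 1) * log (2 * p)) := by
  have hα_geom : ∀ j, α j = (2 * p) ^ j * α 0 :=
    eq_pow_mul_of_succ_eq_mul fun j => by rw [hαrec]; ring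
  have := hl k
  rw [hlrec, ← hαrec, hα_geom,
    log_div (by positivity) (by positivity), log_mul hC₀.ne' (by positivity), log_rpow (hl k),
    log_pow, log_mul (by positivity) hα₀.ne', log_pow]
  push_cast
  ring

theorem log_eq_of_recurrence (hp : 1 < p) (hC₀ : 0 < C₀) (hα₀ : 0 < α 0) (hl : ∀ k, 0 < l k)
    (hαrec : ∀ k, α (k + 1) = 2 * α k * p)
    (hlrec : ∀ k, l (k + 1) = C₀ * l k ^ p / (2 * α k * p) ^ n) (k : ℕ) :
    log (l k) = iterationOffset n p C₀ (α 0) + n * k / (p - 1) * log (2 * p) +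
      p ^ k * (log (l 0) - iterationOffset n p C₀ (α 0)) := by
  set κ := iterationOffset n p C₀ (α 0) with hκ
  have hq : p - 1 ≠ 0 := by linarith
  have particular_solution : ∀ k : ℕ, κ + n * (k + 1 : ℕ) / (p - 1) * log (2 * p) =
      p * (κ + n * k / (p - 1) * log (2 * p)) +
        (log C₀ - n * log (α 0) - n * (k + 1) * log (2 * p)) := by
    intro k
    rw [hκ, iterationOffset]
    push_cast
    field_simp
    ring
  have := sub_eq_pow_mul_sub_of_affine_recurrence (u := fun k => log (l k))
    (w := fun k : ℕ => κ + n * k / (p - 1) * log (2 * p))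
    (log_succ_eq_of_recurrence (by linarith) hC₀ hα₀ hl hαrec hlrec) particular_solution k
  simp only [Nat.cast_zero, mul_zero, zero_div, zero_mul, add_zero] at this
  linarith

theorem eq_rpow_mul_exp_of_recurrence (hp : 1 < p) (hC₀ : 0 < C₀) (hα₀ : 0 < α 0)
    (hl : ∀ k, 0 < l k)
    (hαrec : ∀ k, α (k + 1) = 2 * α k * p)
    (hlrec : ∀ k, l (k + 1) = C₀ * l k ^ p / (2 * α k * p) ^ n) (k : ℕ) :
    l k = (2 * p) ^ ((n * k : ℝ) / (p - 1)) * iterationAmplitude n p C₀ (α 0) (l 0) ^ (p ^ k) *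
      exp (iterationOffset n p C₀ (α 0)) := by
  have h2p : 0 < 2 * p := by linarith
  have hA := iterationAmplitude_pos (n := n) hp hC₀ hα₀ (hl 0)
  refine log_injOn_pos (hl k) (Set.mem_Ioi.2 (by positivity)) ?_
  rw [log_mul (by positivity) (by positivity), log_mul (by positivity) (by positivity),
    log_rpow h2p, log_rpow hA, log_exp, log_iterationAmplitude hp hC₀ hα₀ (hl 0),
    log_eq_of_recurrence hp hC₀ hα₀ hl hαrec hlrec]
  ring

end IterationSequence

theorem iteration_sequence_growth_general
    (n : ℕ) (p C₀ : ℝ) (hp : 1 < p) (hC₀ : 0 < C₀) (hC₀' : C₀ ≤ 1)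
    (l α : ℕ → ℝ) (hl : ∀ k, 0 < l k)
    (hα₀ : max 1 (2 * n / p) ≤ α 0)
    (hαrec : ∀ k, α (k + 1) = 2 * α k * p)
    (hlrec : ∀ k, l (k + 1) = C₀ * l k ^ p / (2 * α k * p) ^ n) :
    (∀ k : ℕ, (2 * p) ^ ((n * k : ℝ) / (p - 1)) *
        (C₀ ^ (1 / (p - 1)) * l 0 /
          ((2 * p) ^ ((n : ℝ) * p / (p - 1) ^ 2) * α 0 ^ ((n : ℝ) / (p - 1))))
          ^ (p ^ k) ≤ l k) ∧
    (l 0 = 2 * C₀ ^ (-(1 / (p - 1))) * (2 * p) ^ ((n : ℝ) * p / (p - 1) ^ 2) *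
        α 0 ^ ((n : ℝ) / (p - 1)) →
      (∀ k : ℕ, (2 * p) ^ ((n * k : ℝ) / (p - 1)) * 2 ^ (p ^ k) ≤ l k) ∧
      Tendsto l atTop atTop) := by
  have hα₀' : 1 ≤ α 0 := le_of_max_le_left hα₀
  have h2p : 0 < 2 * p := by linarith
  have hα₀pos : 0 < α 0 := by linarith
  have hA := iterationAmplitude_pos (n := n) hp hC₀ hα₀pos (hl 0)
  have lower_bound : ∀ k : ℕ, (2 * p) ^ ((n * k : ℝ) / (p - 1)) *
      iterationAmplitude n p C₀ (α 0) (l 0) ^ (p ^ k) ≤ l k := fun k => by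
    rw [eq_rpow_mul_exp_of_recurrence hp hC₀ hα₀pos hl hαrec hlrec k]
    exact le_mul_of_one_le_right (by positivity)
      (one_le_exp (iterationOffset_nonneg hp hC₀.le hC₀' hα₀'))
  refine ⟨lower_bound, fun hl₀ => ?_⟩
  have hA₂ : iterationAmplitude n p C₀ (α 0) (l 0) = 2 := by
    rw [iterationAmplitude, hl₀, rpow_neg hC₀.le]
    have : 0 < C₀ ^ (1 / (p - 1)) := by positivity
    have : 0 < (2 * p) ^ ((n : ℝ) * p / (p - 1) ^ 2) * α 0 ^ ((n : ℝ) / (p - 1)) := by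
      positivity
    field_simp
  rw [hA₂] at lower_bound
  refine ⟨lower_bound, tendsto_atTop_mono (fun k => le_trans ?_ (lower_bound k))
    ((tendsto_rpow_atTop_of_base_gt_one 2 one_lt_two).comp
      (tendsto_pow_atTop_atTop_of_one_lt hp))⟩
  show (2 : ℝ) ^ p ^ k ≤ _
  exact le_mul_of_one_le_left (by positivity)
    (one_le_rpow (by linarith) (div_nonneg (by positivity) (by linarith)))

theorem iteration_sequence_growth
    (n : ℕ) (hn : 2 ≤ n) (p C₀ : ℝ) (hp : 1 < p) (hC₀ : 0 < C₀) (hC₀' : C₀ ≤ 1)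
    (l α : ℕ → ℝ) (hl : ∀ k, 0 < l k) (hα : ∀ k, 0 < α k)
    (hα₀ : max 1 (2 * n / p) ≤ α 0)
    (hαrec : ∀ k, α (k + 1) = 2 * α k * p)
    (hlrec : ∀ k, l (k + 1) = C₀ * l k ^ p / (2 * α k * p) ^ n) :
    (∀ k : ℕ, (2 * p) ^ ((n * k : ℝ) / (p - 1)) *
        (C₀ ^ (1 / (p - 1)) * l 0 /
          ((2 * p) ^ ((n : ℝ) * p / (p - 1) ^ 2) * α 0 ^ ((n : ℝ) / (p - 1))))
          ^ (p ^ k) ≤ l k) ∧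
    (l 0 = 2 * C₀ ^ (-(1 / (p - 1))) * (2 * p) ^ ((n : ℝ) * p / (p - 1) ^ 2) *
        α 0 ^ ((n : ℝ) / (p - 1)) →
      (∀ k : ℕ, (2 * p) ^ ((n * k : ℝ) / (p - 1)) * 2 ^ (p ^ k) ≤ l k) ∧
      Tendsto l atTop atTop) :=
  iteration_sequence_growth_general n p C₀ hp hC₀ hC₀' l α hl hα₀ hαrec hlrec
end

section
/- Let n ≥ 2, p > 1, and let f : [0,1] → [0,∞) be continuous with f(r) ≥ l r^α on [0,1] for some l > 0, α ≥ max{1, 2n/p}. Suppose g, h ∈ C^2([0,1]) satisfy -(1/r^{n-1})(r^{n-1} g')' ≥ C₀ f(r)^p with g(r) ≤ g(0) ≤ 0 on [0,1], and -(1/r^{n-1})(r^{n-1} h')' = g with r^{n-1}g'(r), r^{n-1}h'(r) → 0 as r → 0. Then h(r) ≥ h(0) + [C₀ l^p / ((αp+n)(αp+2)(αp+n+2)(αp+4))] r^{αp+4} on [0,1]. -/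
/-!
Multiplying `-(1/r^m)(r^m u')' ≥ c r^β` by `r^m` and integrating from `0`, where the flux
`r^m u'` (`m = n - 1`) vanishes, gives `u' ≤ -c r^(β+1)/(β+m+1)`; integrating once more,
`u(r) ≤ u(0) - c r^(β+2)/((β+m+1)(β+2))`. Applied to `g` with `c = C₀ l^p`, `β = αp`, this
gives `g ≤ -c' r^(αp+2)`, which is a source of the same shape for `-h`; a second application
yields the bound on `h`.
-/

open Filter Set Topology Real

theorem le_of_deriv_nonpos_of_tendsto_nhdsGT {φ : ℝ → ℝ} {a b L x : ℝ}
    (hφ : DifferentiableOn ℝ φ (Ioo a b)) (hφ' : ∀ y ∈ Ioo a b, deriv φ y ≤ 0)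
    (hlim : Tendsto φ (𝓝[>] a) (𝓝 L)) (hx : x ∈ Ioo a b) : φ x ≤ L := by
  have hanti : AntitoneOn φ (Ioo a b) :=
    antitoneOn_of_deriv_nonpos (convex_Ioo a b) hφ.continuousOn
      (by rwa [interior_Ioo]) (by rwa [interior_Ioo])
  refine ge_of_tendsto hlim ?_
  filter_upwards [Ioo_mem_nhdsGT hx.1] with y hy
  exact hanti ⟨hy.1, hy.2.trans hx.2⟩ hx hy.2.le

theorem tendsto_rpow_nhdsGT_zero {γ : ℝ} (hγ : 0 < γ) :
    Tendsto (fun x : ℝ => x ^ γ) (𝓝[>] 0) (𝓝 0) := by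
  simpa [zero_rpow hγ.ne'] using
    (continuousAt_rpow_const 0 γ (Or.inr hγ.le)).tendsto.mono_left nhdsWithin_le_nhds

theorem le_sub_rpow_of_deriv_le {u : ℝ → ℝ} {b c γ L : ℝ} (hγ : 0 < γ)
    (hu : DifferentiableOn ℝ u (Ioo 0 b))
    (hu' : ∀ x ∈ Ioo 0 b, deriv u x ≤ -(c * x ^ (γ - 1)))
    (hlim : Tendsto u (𝓝[>] 0) (𝓝 L)) {x : ℝ} (hx : x ∈ Ioo 0 b) :
    u x ≤ L - c / γ * x ^ γ := by
  have hv : ∀ y ∈ Ioo 0 b, HasDerivAt (fun s => u s + c / γ * s ^ γ)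
      (deriv u y + c * y ^ (γ - 1)) y := by
    intro y hy
    have hpow : HasDerivAt (fun s => c / γ * s ^ γ) (c * y ^ (γ - 1)) y := by
      refine ((hasDerivAt_rpow_const (Or.inl hy.1.ne')).const_mul (c / γ)).congr_deriv ?_
      field_simp
    exact (hu.differentiableAt (isOpen_Ioo.mem_nhds hy)).hasDerivAt.add hpow
  have hvlim : Tendsto (fun s => u s + c / γ * s ^ γ) (𝓝[>] 0) (𝓝 L) := by
    simpa using hlim.add ((tendsto_rpow_nhdsGT_zero hγ).const_mul (c / γ))
  have := le_of_deriv_nonpos_of_tendsto_nhdsGT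
    (fun y hy => (hv y hy).differentiableAt.differentiableWithinAt)
    (fun y hy => by rw [(hv y hy).deriv]; linarith [hu' y hy]) hvlim hx
  linarith

theorem rpow_mul_rpow_le_rpow {l x y α p : ℝ} (hl : 0 ≤ l) (hx : 0 ≤ x) (hp : 0 ≤ p)
    (h : l * x ^ α ≤ y) : l ^ p * x ^ (α * p) ≤ y ^ p := by
  rw [rpow_mul hx, ← mul_rpow hl (rpow_nonneg hx α)]
  exact rpow_le_rpow (mul_nonneg hl (rpow_nonneg hx α)) h hp

theorem le_sub_rpow_of_radial_le {u : ℝ → ℝ} {m : ℕ} {b c β : ℝ} (hb : 0 < b)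
    (hβm : 0 < β + m + 1) (hβ : 0 < β + 2) (hu : ContDiffOn ℝ 2 u (Icc 0 b))
    (hrad : ∀ x ∈ Ioo 0 b,
      c * x ^ β ≤ -(1 / x ^ m) * deriv (fun s => s ^ m * deriv u s) x)
    (hlim : Tendsto (fun s => s ^ m * deriv u s) (𝓝[>] 0) (𝓝 0)) :
    ∀ x ∈ Icc 0 b, u x ≤ u 0 - c / ((β + m + 1) * (β + 2)) * x ^ (β + 2) := by
  have hu₂ : ContDiffOn ℝ 2 u (Ioo 0 b) := hu.mono Ioo_subset_Icc_self
  have hdu : DifferentiableOn ℝ u (Ioo 0 b) := hu₂.differentiableOn two_ne_zero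
  have hddu : DifferentiableOn ℝ (deriv u) (Ioo 0 b) :=
    (hu₂.deriv_of_isOpen isOpen_Ioo (by norm_num) : ContDiffOn ℝ 1 _ _).differentiableOn
      one_ne_zero
  have hflux : ∀ x ∈ Ioo 0 b,
      deriv (fun s => s ^ m * deriv u s) x ≤ -(c * x ^ (β + m + 1 - 1)) := by
    intro x hx
    have := hrad x hx
    rw [neg_mul, one_div_mul_eq_div, le_neg, div_le_iff₀ (pow_pos hx.1 m)] at this
    rw [add_sub_cancel_right, rpow_add hx.1, rpow_natCast]
    linarith
  have hflux_le : ∀ x ∈ Ioo 0 b,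
      x ^ m * deriv u x ≤ 0 - c / (β + m + 1) * x ^ (β + m + 1) :=
    fun x hx => le_sub_rpow_of_deriv_le (u := fun s => s ^ m * deriv u s) hβm
      ((differentiableOn_pow m).mul hddu) hflux hlim hx
  have hderiv : ∀ x ∈ Ioo 0 b, deriv u x ≤ -(c / (β + m + 1) * x ^ (β + 2 - 1)) := by
    intro x hx
    have hsplit : x ^ (β + m + 1) = x ^ m * x ^ (β + 2 - 1) := by
      rw [← rpow_natCast, ← rpow_add hx.1]; ring_nf
    have := hflux_le x hx
    rw [hsplit] at this
    nlinarith [pow_pos hx.1 m]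
  have hu0 : Tendsto u (𝓝[>] 0) (𝓝 (u 0)) :=
    ((hu.continuousOn 0 ⟨le_rfl, hb.le⟩).mono_of_mem_nhdsWithin (Icc_mem_nhdsGT hb)).tendsto
  intro x hx
  refine le_on_closure (s := Ioo 0 b) (f := u)
    (g := fun y => u 0 - c / ((β + m + 1) * (β + 2)) * y ^ (β + 2))
    (fun y hy => ?_) ?_ ?_ (by rwa [closure_Ioo hb.ne])
  · rw [← div_div]
    exact le_sub_rpow_of_deriv_le hβ hdu hderiv hu0 hy
  · rw [closure_Ioo hb.ne]; exact hu.continuousOn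
  · rw [closure_Ioo hb.ne]
    exact continuousOn_const.sub (continuousOn_const.mul
      (continuousOn_id.rpow_const fun _ _ => Or.inr hβ.le))

theorem add_rpow_le_of_radial_le {u : ℝ → ℝ} {m : ℕ} {b c β : ℝ} (hb : 0 < b)
    (hβm : 0 < β + m + 1) (hβ : 0 < β + 2) (hu : ContDiffOn ℝ 2 u (Icc 0 b))
    (hrad : ∀ x ∈ Ioo 0 b,
      -(1 / x ^ m) * deriv (fun s => s ^ m * deriv u s) x ≤ -(c * x ^ β))
    (hlim : Tendsto (fun s => s ^ m * deriv u s) (𝓝[>] 0) (𝓝 0)) :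
    ∀ x ∈ Icc 0 b, u 0 + c / ((β + m + 1) * (β + 2)) * x ^ (β + 2) ≤ u x := by
  have hflux_neg :
      (fun s => s ^ m * deriv (fun t => -u t) s) = fun s => -(s ^ m * deriv u s) := by
    simp only [deriv.fun_neg', mul_neg]
  have hrad_neg : ∀ x ∈ Ioo 0 b,
      c * x ^ β ≤ -(1 / x ^ m) * deriv (fun s => s ^ m * deriv (fun t => -u t) s) x := by
    intro x hx
    rw [hflux_neg, deriv.fun_neg', mul_neg, ← neg_mul]
    linarith [hrad x hx]
  intro x hx
  have := le_sub_rpow_of_radial_le hb hβm hβ hu.neg hrad_neg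
    (by simpa only [hflux_neg, neg_zero] using hlim.neg) x hx
  linarith

theorem radial_iteration_step_general
    (n : ℕ) (hn : 2 ≤ n) (p l α C₀ : ℝ) (hp : 1 < p) (hl : 0 < l)
    (hα : max 1 (2 * n / p) ≤ α) (hC₀ : 0 < C₀)
    (f : ℝ → ℝ)
    (hflb : ∀ r ∈ Icc (0 : ℝ) 1, l * r ^ α ≤ f r)
    (g h : ℝ → ℝ)
    (hg : ContDiffOn ℝ 2 g (Icc 0 1)) (hh : ContDiffOn ℝ 2 h (Icc 0 1))
    (hgineq : ∀ r ∈ Ioc (0 : ℝ) 1,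
      C₀ * f r ^ p ≤ -(1 / r ^ (n - 1)) * deriv (fun s => s ^ (n - 1) * deriv g s) r)
    (hg0 : g 0 ≤ 0)
    (hheq : ∀ r ∈ Ioc (0 : ℝ) 1,
      -(1 / r ^ (n - 1)) * deriv (fun s => s ^ (n - 1) * deriv h s) r = g r)
    (hglim : Tendsto (fun r => r ^ (n - 1) * deriv g r) (𝓝[>] 0) (𝓝 0))
    (hhlim : Tendsto (fun r => r ^ (n - 1) * deriv h r) (𝓝[>] 0) (𝓝 0)) :
    ∀ r ∈ Icc (0 : ℝ) 1,
      h 0 + C₀ * l ^ p / ((α * p + n) * (α * p + 2) * (α * p + n + 2) * (α * p + 4)) *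
        r ^ (α * p + 4) ≤ h r := by
  set m := n - 1
  have hm : (m : ℝ) + 1 = n := by exact_mod_cast Nat.sub_add_cancel (by omega : 1 ≤ n)
  have hq : 0 < α * p := mul_pos (by linarith [le_max_left 1 (2 * n / p)]) (by linarith)
  have hg_le := le_sub_rpow_of_radial_le (c := C₀ * l ^ p) one_pos (by linarith) (by linarith) hg
    (fun x hx => calc
      C₀ * l ^ p * x ^ (α * p) = C₀ * (l ^ p * x ^ (α * p)) := mul_assoc _ _ _
      _ ≤ C₀ * f x ^ p := mul_le_mul_of_nonneg_left
        (rpow_mul_rpow_le_rpow hl.le hx.1.le (by linarith) (hflb x (Ioo_subset_Icc_self hx)))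
        hC₀.le
      _ ≤ _ := hgineq x (Ioo_subset_Ioc_self hx))
    hglim
  have hh_le := add_rpow_le_of_radial_le (β := α * p + 2)
    (c := C₀ * l ^ p / ((α * p + m + 1) * (α * p + 2))) one_pos (by linarith) (by linarith) hh
    (fun x hx => by
      rw [hheq x (Ioo_subset_Ioc_self hx)]
      linarith [hg_le x (Ioo_subset_Icc_self hx)])
    hhlim
  intro r hr
  rw [show α * p + 4 = α * p + 2 + 2 by ring]
  convert hh_le r hr using 3
  rw [← hm, div_div]
  ring

theorem radial_iteration_step
    (n : ℕ) (hn : 2 ≤ n) (p l α C₀ : ℝ) (hp : 1 < p) (hl : 0 < l)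
    (hα : max 1 (2 * n / p) ≤ α) (hC₀ : 0 < C₀)
    (f : ℝ → ℝ) (hf : ContinuousOn f (Icc 0 1))
    (hf0 : ∀ r ∈ Icc (0 : ℝ) 1, 0 ≤ f r)
    (hflb : ∀ r ∈ Icc (0 : ℝ) 1, l * r ^ α ≤ f r)
    (g h : ℝ → ℝ)
    (hg : ContDiffOn ℝ 2 g (Icc 0 1)) (hh : ContDiffOn ℝ 2 h (Icc 0 1))
    (hgineq : ∀ r ∈ Ioc (0 : ℝ) 1,
      C₀ * f r ^ p ≤ -(1 / r ^ (n - 1)) * deriv (fun s => s ^ (n - 1) * deriv g s) r)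
    (hgub : ∀ r ∈ Icc (0 : ℝ) 1, g r ≤ g 0) (hg0 : g 0 ≤ 0)
    (hheq : ∀ r ∈ Ioc (0 : ℝ) 1,
      -(1 / r ^ (n - 1)) * deriv (fun s => s ^ (n - 1) * deriv h s) r = g r)
    (hglim : Tendsto (fun r => r ^ (n - 1) * deriv g r) (𝓝[>] 0) (𝓝 0))
    (hhlim : Tendsto (fun r => r ^ (n - 1) * deriv h r) (𝓝[>] 0) (𝓝 0)) :
    ∀ r ∈ Icc (0 : ℝ) 1,
      h 0 + C₀ * l ^ p / ((α * p + n) * (α * p + 2) * (α * p + n + 2) * (α * p + 4)) *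
        r ^ (α * p + 4) ≤ h r :=
  radial_iteration_step_general n hn p l α C₀ hp hl hα hC₀ f hflb g h hg hh hgineq hg0 hheq hglim
    hhlim
end

section
/- Let n ≥ 3 and let h be a nonnegative locally integrable function on ℝ^n, not identically zero a.e., with ∫_{ℝ^n} h(z)/|z|^{n-2} dz < ∞. Then there exist C > 0 and R₀ ≥ 3 such that for all |y| ≥ R₀: ∫_{ℝ^n} h(z)/|y-z|² dz ≥ C / (|y|² ln|y|). -/
open MeasureTheory Real

/-! For `‖y‖` beyond the radius `r` of a ball carrying positive mass of `h`, every `z` in that ball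
satisfies `0 < ‖y - z‖ ≤ 2 ‖y‖`, so the potential at `y` is at least `(4 ‖y‖²)⁻¹` times that mass.
This already beats `C / (‖y‖² log ‖y‖)` once `log ‖y‖ ≥ 1`. -/

theorem exists_setLIntegral_ball_ne_zero {X : Type*} [PseudoMetricSpace X] [MeasurableSpace X]
    {μ : Measure X} {f : X → ENNReal} (hf : ∫⁻ x, f x ∂μ ≠ 0) (x₀ : X) :
    ∃ k : ℕ, ∫⁻ x in Metric.ball x₀ k, f x ∂μ ≠ 0 := by
  by_contra! hball
  refine hf (le_antisymm ?_ bot_le)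
  calc ∫⁻ x, f x ∂μ = ∫⁻ x in ⋃ k : ℕ, Metric.ball x₀ k, f x ∂μ := by
        rw [Metric.iUnion_ball_nat, Measure.restrict_univ]
    _ ≤ ∑' k : ℕ, ∫⁻ x in Metric.ball x₀ k, f x ∂μ := lintegral_iUnion_le _ _
    _ = 0 := by simp [hball]

theorem lintegral_ofReal_ne_zero {X : Type*} [MeasurableSpace X] {μ : Measure X} {f : X → ℝ}
    (hf₀ : 0 ≤ f) (hfm : AEMeasurable f μ) (hf : ¬ f =ᵐ[μ] 0) :
    ∫⁻ x, ENNReal.ofReal (f x) ∂μ ≠ 0 := by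
  rw [Ne, lintegral_eq_zero_iff' hfm.ennreal_ofReal]
  refine fun hzero => hf ?_
  filter_upwards [hzero] with x hx
  exact le_antisymm (ENNReal.ofReal_eq_zero.mp hx) (hf₀ x)

theorem mul_inv_four_mul_sq_le_div_norm_sub_sq {E : Type*} [SeminormedAddCommGroup E]
    {a : ℝ} (ha : 0 ≤ a) {y z : E} (hzy : ‖z‖ < ‖y‖) :
    a * (4 * ‖y‖ ^ 2)⁻¹ ≤ a / ‖y - z‖ ^ 2 := by
  have hpos : 0 < ‖y - z‖ := by linarith [norm_sub_norm_le y z]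
  have hle : ‖y - z‖ ≤ 2 * ‖y‖ := by linarith [norm_sub_le y z]
  rw [← div_eq_mul_inv]
  exact div_le_div_of_nonneg_left ha (by positivity) (by nlinarith)

theorem ofReal_inv_four_mul_sq_mul_setLIntegral_ball_le {E : Type*} [SeminormedAddCommGroup E]
    [MeasurableSpace E] [OpensMeasurableSpace E] {μ : Measure E} {f : E → ℝ} (hf₀ : 0 ≤ f)
    {r : ℝ} {y : E} (hry : r ≤ ‖y‖) :
    ENNReal.ofReal (4 * ‖y‖ ^ 2)⁻¹ * ∫⁻ z in Metric.ball 0 r, ENNReal.ofReal (f z) ∂μ ≤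
      ∫⁻ z, ENNReal.ofReal (f z / ‖y - z‖ ^ 2) ∂μ :=
  calc ENNReal.ofReal (4 * ‖y‖ ^ 2)⁻¹ * ∫⁻ z in Metric.ball 0 r, ENNReal.ofReal (f z) ∂μ
      = ∫⁻ z in Metric.ball 0 r, ENNReal.ofReal (f z * (4 * ‖y‖ ^ 2)⁻¹) ∂μ := by
        rw [← lintegral_const_mul' _ _ ENNReal.ofReal_ne_top]
        simp_rw [ENNReal.ofReal_mul (hf₀ _), mul_comm]
    _ ≤ ∫⁻ z in Metric.ball 0 r, ENNReal.ofReal (f z / ‖y - z‖ ^ 2) ∂μ := by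
        refine setLIntegral_mono' measurableSet_ball fun z hz => ENNReal.ofReal_le_ofReal ?_
        exact mul_inv_four_mul_sq_le_div_norm_sub_sq (hf₀ z)
          ((mem_ball_zero_iff.mp hz).trans_le hry)
    _ ≤ ∫⁻ z, ENNReal.ofReal (f z / ‖y - z‖ ^ 2) ∂μ := setLIntegral_le_lintegral _ _

theorem one_le_log_of_three_le {t : ℝ} (ht : 3 ≤ t) : 1 ≤ Real.log t := by
  rw [Real.le_log_iff_exp_le (by linarith)]
  linarith [Real.exp_one_lt_three]

theorem lower_bound_potential_at_infinity_general
    (n : ℕ) (h : EuclideanSpace ℝ (Fin n) → ℝ)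
    (h0 : ∀ z, 0 ≤ h z) (hloc : LocallyIntegrable h volume)
    (hne : ¬ (∀ᵐ z : EuclideanSpace ℝ (Fin n), h z = 0)) :
    ∃ C > (0 : ℝ), ∃ R₀ ≥ (3 : ℝ), ∀ y : EuclideanSpace ℝ (Fin n), R₀ ≤ ‖y‖ →
      ENNReal.ofReal (C / (‖y‖ ^ 2 * Real.log ‖y‖)) ≤
        ∫⁻ z, ENNReal.ofReal (h z / ‖y - z‖ ^ 2) := by
  obtain ⟨k, hk⟩ := exists_setLIntegral_ball_ne_zero (lintegral_ofReal_ne_zero h0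
    hloc.aestronglyMeasurable.aemeasurable hne) 0
  obtain ⟨c, hc₀, hc, hcI⟩ := ENNReal.lt_iff_exists_real_btwn.mp (pos_iff_ne_zero.mpr hk)
  refine ⟨c / 4, by simpa using hc, max 3 k, le_max_left _ _, fun y hy => ?_⟩
  have hy3 : 3 ≤ ‖y‖ := (le_max_left _ _).trans hy
  have hlog : c / 4 / (‖y‖ ^ 2 * Real.log ‖y‖) ≤ (4 * ‖y‖ ^ 2)⁻¹ * c := by
    rw [div_div, ← div_eq_inv_mul]
    refine div_le_div_of_nonneg_left hc₀ (by positivity) ?_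
    gcongr
    exact le_mul_of_one_le_right (sq_nonneg _) (one_le_log_of_three_le hy3)
  calc ENNReal.ofReal (c / 4 / (‖y‖ ^ 2 * Real.log ‖y‖))
      ≤ ENNReal.ofReal (4 * ‖y‖ ^ 2)⁻¹ * ENNReal.ofReal c := by
        rw [← ENNReal.ofReal_mul (by positivity)]
        exact ENNReal.ofReal_le_ofReal hlog
    _ ≤ ENNReal.ofReal (4 * ‖y‖ ^ 2)⁻¹ * ∫⁻ z in Metric.ball 0 k, ENNReal.ofReal (h z) :=
        mul_le_mul_right hcI.le _
    _ ≤ ∫⁻ z, ENNReal.ofReal (h z / ‖y - z‖ ^ 2) :=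
        ofReal_inv_four_mul_sq_mul_setLIntegral_ball_le h0
          ((le_max_right _ _).trans hy)

theorem lower_bound_potential_at_infinity
    (n : ℕ) (hn : 3 ≤ n) (h : EuclideanSpace ℝ (Fin n) → ℝ)
    (h0 : ∀ z, 0 ≤ h z) (hloc : LocallyIntegrable h volume)
    (hne : ¬ (∀ᵐ z : EuclideanSpace ℝ (Fin n), h z = 0))
    (hint : Integrable (fun z : EuclideanSpace ℝ (Fin n) => h z / ‖z‖ ^ (n - 2))) :
    ∃ C > (0 : ℝ), ∃ R₀ ≥ (3 : ℝ), ∀ y : EuclideanSpace ℝ (Fin n), R₀ ≤ ‖y‖ →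
      ENNReal.ofReal (C / (‖y‖ ^ 2 * Real.log ‖y‖)) ≤
        ∫⁻ z, ENNReal.ofReal (h z / ‖y - z‖ ^ 2) :=
  lower_bound_potential_at_infinity_general n h h0 hloc hne
end

section
/- Let n ≥ 3, 2 ≤ a < n, p > 1, and let u be continuous, positive on the closed unit ball of ℝ^n, and suppose w ∈ C^2(ℝ^n \ {0}) ∩ C(ℝ^n) satisfies -Δw(x) ≥ u(x)^p/|x|^a for 0 < |x| ≤ 1 and w is superharmonic with spherical average w̄ about 0 nonincreasing. Then one reaches a contradiction: more precisely, -w̄'(r) ≥ (c^p/(n-a)) r^{1-a} for 0 < r ≤ 1 with c = min_{|x|≤1} u(x) > 0, and integrating from 0 to 1 forces w̄(0) = +∞, contradicting continuity of w at 0. Hence no such w exists. -/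
open MeasureTheory Filter Asymptotics Metric Set Real Topology

noncomputable def laplacian {n : ℕ} (f : EuclideanSpace ℝ (Fin n) → ℝ)
    (x : EuclideanSpace ℝ (Fin n)) : ℝ :=
  ∑ i : Fin n, fderiv ℝ (fun y => fderiv ℝ f y (EuclideanSpace.single i 1)) x
    (EuclideanSpace.single i 1)

/-- `negLapIter k f` is `(-Δ)^k f`, the `k`-fold iterated negative Laplacian. -/
noncomputable def negLapIter {n : ℕ} (k : ℕ) (f : EuclideanSpace ℝ (Fin n) → ℝ) :
    EuclideanSpace ℝ (Fin n) → ℝ :=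
  (fun g x => -laplacian g x)^[k] f

/-- The normalizing constant of the Riesz potential of order `α` in `ℝⁿ`. -/
noncomputable def rieszConst (α : ℝ) (n : ℕ) : ℝ :=
  Real.Gamma (((n : ℝ) - α) / 2) / (Real.pi ^ ((n : ℝ) / 2) * 2 ^ α * Real.Gamma (α / 2))

/-!
Let `c > 0` be the minimum of `u ^ p` on the closed unit ball; since `a ≥ 2`, `-Δw ≥ c / ‖x‖²`
on the punctured unit ball. As `Δ log ‖x‖ = (n - 2) / ‖x‖²`, the function `w + ε log ‖x‖` with
`ε = c / (2 (n - 2))` is still strictly superharmonic there, and for `n ≥ 3` so is its sum with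
any positive multiple of `1 / ‖x‖`. The minimum principle on the annuli `δ < ‖x‖ < 1`, followed
by `δ → 0`, gives `w x ≥ min w - ε log ‖x‖`: `w` is unbounded near `0`, contradicting continuity.
-/

section SecondDerivative

theorem deriv_deriv_nonneg_of_isLocalMin {f : ℝ → ℝ} {t₀ : ℝ} (hmin : IsLocalMin f t₀)
    (hc : ContinuousAt f t₀) : 0 ≤ deriv (deriv f) t₀ := by
  by_contra! hneg
  -- by the second derivative test `t₀` is then also a local maximum, so `f` is locally constant
  have hmax := isLocalMax_of_deriv_deriv_neg hneg hmin.deriv_eq_zero hc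
  have hconst : f =ᶠ[𝓝 t₀] fun _ => f t₀ :=
    (hmin.and hmax).mono fun t ht => le_antisymm ht.2 ht.1
  have hderiv : deriv f =ᶠ[𝓝 t₀] fun _ => 0 :=
    hconst.eventually_nhds.mono fun t ht =>
      (Filter.EventuallyEq.deriv_eq ht).trans (deriv_const t _)
  simp [hderiv.deriv_eq] at hneg

variable {E : Type*} [NormedAddCommGroup E] [NormedSpace ℝ E] {φ : E → ℝ} {x : E}

theorem ContDiffAt.differentiableAt_fderiv_apply (hφ : ContDiffAt ℝ 2 φ x) (v : E) :
    DifferentiableAt ℝ (fun y => fderiv ℝ φ y v) x :=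
  ((hφ.fderiv_right (m := 1) (by norm_num)).differentiableAt (by norm_num)).clm_apply
    (differentiableAt_const v)

theorem fderiv_fderiv_apply_nonneg_of_isLocalMin (hφ : ContDiffAt ℝ 2 φ x)
    (hmin : IsLocalMin φ x) (v : E) : 0 ≤ fderiv ℝ (fun y => fderiv ℝ φ y v) x v := by
  set ℓ : ℝ → E := fun t => x + t • v
  have hℓ : ∀ t, HasDerivAt ℓ v t := fun t => by
    simpa [ℓ] using ((hasDerivAt_id t).smul_const v).const_add x
  have hℓ0 : ℓ 0 = x := by simp [ℓ]
  have hℓc : Continuous ℓ := by fun_prop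
  have hℓx : Tendsto ℓ (𝓝 0) (𝓝 x) := hℓ0 ▸ hℓc.tendsto 0
  have hderiv : deriv (φ ∘ ℓ) =ᶠ[𝓝 0] fun t => fderiv ℝ φ (ℓ t) v := by
    filter_upwards [hℓx.eventually (hφ.eventually (by simp))] with t ht
    exact ((ht.differentiableAt (by norm_num)).hasFDerivAt.comp_hasDerivAt t (hℓ t)).deriv
  have hsecond : HasDerivAt (fun t => fderiv ℝ φ (ℓ t) v)
      (fderiv ℝ (fun y => fderiv ℝ φ y v) x v) 0 := by
    have hD : HasFDerivAt (fun y => fderiv ℝ φ y v) (fderiv ℝ (fun y => fderiv ℝ φ y v) x)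
        (ℓ 0) := hℓ0 ▸ (hφ.differentiableAt_fderiv_apply v).hasFDerivAt
    exact hD.comp_hasDerivAt 0 (hℓ 0)
  have hmin' : IsLocalMin (φ ∘ ℓ) 0 :=
    (hℓ0 ▸ hmin : IsLocalMin φ (ℓ 0)).comp_continuous hℓc.continuousAt
  have hc : ContinuousAt (φ ∘ ℓ) 0 :=
    (hℓ0 ▸ hφ.continuousAt : ContinuousAt φ (ℓ 0)).comp hℓc.continuousAt
  simpa [hderiv.deriv_eq, hsecond.deriv] using deriv_deriv_nonneg_of_isLocalMin hmin' hc

end SecondDerivative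

section Laplacian

variable {n : ℕ} {f g : EuclideanSpace ℝ (Fin n) → ℝ} {x : EuclideanSpace ℝ (Fin n)}

theorem laplacian_nonneg_of_isLocalMin (hf : ContDiffAt ℝ 2 f x) (hmin : IsLocalMin f x) :
    0 ≤ laplacian f x :=
  Finset.sum_nonneg fun _ _ => fderiv_fderiv_apply_nonneg_of_isLocalMin hf hmin _

theorem laplacian_add (hf : ContDiffAt ℝ 2 f x) (hg : ContDiffAt ℝ 2 g x) :
    laplacian (fun y => f y + g y) x = laplacian f x + laplacian g x := by
  unfold laplacian
  rw [← Finset.sum_add_distrib]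
  refine Finset.sum_congr rfl fun i _ => ?_
  set e : EuclideanSpace ℝ (Fin n) := EuclideanSpace.single i 1
  have hsum : (fun y => fderiv ℝ (fun z => f z + g z) y e) =ᶠ[𝓝 x]
      fun y => fderiv ℝ f y e + fderiv ℝ g y e := by
    filter_upwards [hf.eventually (by simp), hg.eventually (by simp)] with y hfy hgy
    rw [fderiv_fun_add (hfy.differentiableAt (by norm_num)) (hgy.differentiableAt (by norm_num)),
      add_apply]
  rw [hsum.fderiv_eq, fderiv_fun_add (hf.differentiableAt_fderiv_apply e)
    (hg.differentiableAt_fderiv_apply e), add_apply]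

theorem laplacian_const_mul (c : ℝ) : laplacian (fun y => c * f y) x = c * laplacian f x := by
  simp only [laplacian, Finset.mul_sum]
  refine Finset.sum_congr rfl fun i _ => ?_
  rw [show (fun y => c * f y) = c • f from rfl, fderiv_const_smul_field,
    show (fun y => (c • fderiv ℝ f) y (EuclideanSpace.single i 1)) =
      c • fun y => fderiv ℝ f y (EuclideanSpace.single i 1) from rfl, fderiv_const_smul_field]
  rfl

end Laplacian

section Radial

variable {n : ℕ} {x : EuclideanSpace ℝ (Fin n)}

theorem laplacian_comp_norm_sq {f f' f'' : ℝ → ℝ}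
    (hf : ∀ q, 0 < q → HasDerivAt f (f' q) q) (hf' : ∀ q, 0 < q → HasDerivAt f' (f'' q) q)
    (hx : x ≠ 0) :
    laplacian (fun y => f (‖y‖ ^ 2)) x =
      4 * ‖x‖ ^ 2 * f'' (‖x‖ ^ 2) + 2 * n * f' (‖x‖ ^ 2) := by
  have hq : ∀ y : EuclideanSpace ℝ (Fin n), y ≠ 0 → 0 < ‖y‖ ^ 2 := fun y hy => by positivity
  have hdiag : ∀ i : Fin n,
      fderiv ℝ (fun y => fderiv ℝ (fun z => f (‖z‖ ^ 2)) y (EuclideanSpace.single i 1)) x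
        (EuclideanSpace.single i 1) = 2 * f' (‖x‖ ^ 2) + 4 * f'' (‖x‖ ^ 2) * x i ^ 2 := by
    intro i
    set e : EuclideanSpace ℝ (Fin n) := EuclideanSpace.single i 1
    have he : ‖e‖ = 1 := by simp [e]
    have hex : inner ℝ e x = x i := by simp [e, EuclideanSpace.inner_single_left]
    have hfirst : (fun y => fderiv ℝ (fun z => f (‖z‖ ^ 2)) y e) =ᶠ[𝓝 x]
        fun y => f' (‖y‖ ^ 2) * (2 * innerSL ℝ e y) := by
      filter_upwards [isOpen_compl_singleton.mem_nhds hx] with y hy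
      have hy' : HasFDerivAt (fun z => f (‖z‖ ^ 2)) (f' (‖y‖ ^ 2) • (2 • innerSL ℝ y)) y :=
        (hf _ (hq y hy)).comp_hasFDerivAt y (hasStrictFDerivAt_norm_sq y).hasFDerivAt
      rw [hy'.fderiv]
      simp [real_inner_comm]
    have hsecond : HasFDerivAt (fun y => f' (‖y‖ ^ 2) * (2 * innerSL ℝ e y))
        (f' (‖x‖ ^ 2) • (2 : ℝ) • innerSL ℝ e +
          (2 * innerSL ℝ e x) • f'' (‖x‖ ^ 2) • 2 • innerSL ℝ x) x :=
      ((hf' _ (hq x hx)).comp_hasFDerivAt x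
        (hasStrictFDerivAt_norm_sq x).hasFDerivAt).mul ((innerSL ℝ e).hasFDerivAt.const_mul 2)
    rw [hfirst.fderiv_eq, hsecond.fderiv]
    simp only [add_apply, smul_apply, innerSL_apply_apply, smul_eq_mul, nsmul_eq_mul,
      real_inner_self_eq_norm_sq, he, real_inner_comm e x, hex]
    ring
  simp only [laplacian, hdiag, Finset.sum_add_distrib, ← Finset.mul_sum, Finset.sum_const,
    ← EuclideanSpace.real_norm_sq_eq]
  simp
  ring

theorem laplacian_log_norm (hx : x ≠ 0) :
    laplacian (fun y => log ‖y‖) x = (n - 2) / ‖x‖ ^ 2 := by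
  have hsq : (fun y : EuclideanSpace ℝ (Fin n) => log ‖y‖) = fun y => 2⁻¹ * log (‖y‖ ^ 2) := by
    ext y
    rw [Real.log_pow]
    ring
  have hd : ∀ q : ℝ, 0 < q → HasDerivAt (fun q => 2⁻¹ * log q) (2⁻¹ * q⁻¹) q :=
    fun q hq => (hasDerivAt_log hq.ne').const_mul _
  have hd' : ∀ q : ℝ, 0 < q → HasDerivAt (fun q => 2⁻¹ * q⁻¹) (2⁻¹ * -(q ^ 2)⁻¹) q :=
    fun q hq => (hasDerivAt_inv hq.ne').const_mul _
  rw [hsq, laplacian_comp_norm_sq hd hd' hx]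
  have : ‖x‖ ≠ 0 := norm_ne_zero_iff.mpr hx
  field_simp
  ring

theorem laplacian_norm_rpow (k : ℝ) (hx : x ≠ 0) :
    laplacian (fun y => ‖y‖ ^ k) x = k * (k + n - 2) * ‖x‖ ^ (k - 2) := by
  have hsq : (fun y : EuclideanSpace ℝ (Fin n) => ‖y‖ ^ k) = fun y => (‖y‖ ^ 2) ^ (k / 2) := by
    ext y
    rw [← Real.rpow_natCast, ← Real.rpow_mul (norm_nonneg y)]
    ring_nf
  have hd : ∀ q : ℝ, 0 < q →
      HasDerivAt (fun q => q ^ (k / 2)) (k / 2 * q ^ (k / 2 - 1)) q :=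
    fun q hq => hasDerivAt_rpow_const (Or.inl hq.ne')
  have hd' : ∀ q : ℝ, 0 < q →
      HasDerivAt (fun q => k / 2 * q ^ (k / 2 - 1))
        (k / 2 * ((k / 2 - 1) * q ^ (k / 2 - 1 - 1))) q :=
    fun q hq => (hasDerivAt_rpow_const (Or.inl hq.ne')).const_mul _
  rw [hsq, laplacian_comp_norm_sq hd hd' hx]
  have hpos : 0 < ‖x‖ := norm_pos_iff.mpr hx
  have hpow : (‖x‖ ^ 2) ^ (k / 2 - 1) = ‖x‖ ^ (k - 2) := by
    rw [← Real.rpow_natCast, ← Real.rpow_mul hpos.le]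
    ring_nf
  have hmul : ‖x‖ ^ 2 * (‖x‖ ^ 2) ^ (k / 2 - 1 - 1) = ‖x‖ ^ (k - 2) := by
    rw [← Real.rpow_natCast, ← Real.rpow_mul hpos.le, ← Real.rpow_add hpos]
    ring_nf
  rw [hpow, mul_assoc 4 (‖x‖ ^ 2), ← hmul]
  ring

theorem laplacian_add_log_norm_add_inv_norm {w : EuclideanSpace ℝ (Fin n) → ℝ}
    (hw : ContDiffAt ℝ 2 w x) (hx : x ≠ 0) (ε η : ℝ) :
    laplacian (fun y => w y + ε * log ‖y‖ + η * ‖y‖ ^ (-1 : ℝ)) x =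
      laplacian w x + ε * (n - 2) / ‖x‖ ^ 2 - η * (n - 3) * ‖x‖ ^ (-3 : ℝ) := by
  have hnorm : ContDiffAt ℝ 2 (fun y : EuclideanSpace ℝ (Fin n) => ‖y‖) x := contDiffAt_norm ℝ hx
  have hlog : ContDiffAt ℝ 2 (fun y : EuclideanSpace ℝ (Fin n) => log ‖y‖) x :=
    hnorm.log (norm_ne_zero_iff.mpr hx)
  have hinv : ContDiffAt ℝ 2 (fun y : EuclideanSpace ℝ (Fin n) => ‖y‖ ^ (-1 : ℝ)) x :=
    hnorm.rpow_const_of_ne (norm_ne_zero_iff.mpr hx)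
  rw [laplacian_add (hw.add (contDiffAt_const.mul hlog)) (contDiffAt_const.mul hinv),
    laplacian_add hw (contDiffAt_const.mul hlog), laplacian_const_mul, laplacian_const_mul,
    laplacian_log_norm hx, laplacian_norm_rpow _ hx]
  norm_num
  ring

end Radial

section MinimumPrinciple

variable {n : ℕ}

theorem le_of_forall_frontier_le_of_laplacian_neg {U : Set (EuclideanSpace ℝ (Fin n))}
    {φ : EuclideanSpace ℝ (Fin n) → ℝ} {m : ℝ} (hU : IsOpen U) (hUb : Bornology.IsBounded U)
    (hφc : ContinuousOn φ (closure U)) (hφ : ContDiffOn ℝ 2 φ U)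
    (hΔ : ∀ x ∈ U, laplacian φ x < 0) (hfr : ∀ x ∈ frontier U, m ≤ φ x)
    {x : EuclideanSpace ℝ (Fin n)} (hx : x ∈ closure U) : m ≤ φ x := by
  obtain ⟨z, hzU, hzmin⟩ := hUb.isCompact_closure.exists_isMinOn ⟨x, hx⟩ hφc
  refine le_trans ?_ (hzmin hx)
  by_cases hz : z ∈ U
  · have hloc : IsLocalMin φ z := (hzmin.on_subset subset_closure).isLocalMin (hU.mem_nhds hz)
    linarith [laplacian_nonneg_of_isLocalMin (hφ.contDiffAt (hU.mem_nhds hz)) hloc, hΔ z hz]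
  · exact hfr z (hU.frontier_eq ▸ ⟨hzU, hz⟩)

end MinimumPrinciple

section Annulus

variable {E : Type*} [SeminormedAddCommGroup E] {r R : ℝ}

theorem isOpen_setOf_norm_mem_Ioo : IsOpen {y : E | ‖y‖ ∈ Ioo r R} :=
  isOpen_Ioo.preimage continuous_norm

theorem closure_setOf_norm_mem_Ioo_subset :
    closure {y : E | ‖y‖ ∈ Ioo r R} ⊆ {y | ‖y‖ ∈ Icc r R} :=
  closure_minimal (fun _ hy => Ioo_subset_Icc_self hy) (isClosed_Icc.preimage continuous_norm)

theorem norm_eq_or_norm_eq_of_mem_frontier_setOf_norm_mem_Ioo {y : E}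
    (hy : y ∈ frontier {y : E | ‖y‖ ∈ Ioo r R}) : ‖y‖ = r ∨ ‖y‖ = R := by
  rw [isOpen_setOf_norm_mem_Ioo.frontier_eq] at hy
  obtain ⟨hry, hyR⟩ := closure_setOf_norm_mem_Ioo_subset hy.1
  rcases hry.eq_or_lt with hry | hry
  · exact Or.inl hry.symm
  · exact Or.inr (hyR.eq_or_lt.resolve_right fun h => hy.2 ⟨hry, h⟩)

end Annulus

section Blowup

variable {n : ℕ} {w : EuclideanSpace ℝ (Fin n) → ℝ} {c ε m : ℝ}

theorem laplacian_add_log_norm_add_inv_norm_neg (hn : 3 ≤ n) (hεc : ε * (n - 2) < c) {η : ℝ}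
    (hη : 0 ≤ η) {x : EuclideanSpace ℝ (Fin n)} (hw : ContDiffAt ℝ 2 w x) (hx : x ≠ 0)
    (hΔ : laplacian w x ≤ -c / ‖x‖ ^ 2) :
    laplacian (fun y => w y + ε * log ‖y‖ + η * ‖y‖ ^ (-1 : ℝ)) x < 0 := by
  have hxpos : 0 < ‖x‖ := norm_pos_iff.mpr hx
  have hn3 : (3 : ℝ) ≤ n := by exact_mod_cast hn
  have hinv : 0 ≤ η * (n - 3) * ‖x‖ ^ (-3 : ℝ) := by
    have := sub_nonneg.mpr hn3
    positivity
  have hlog : -c / ‖x‖ ^ 2 + ε * (n - 2) / ‖x‖ ^ 2 < 0 := by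
    rw [← add_div]
    exact div_neg_of_neg_of_pos (by linarith) (by positivity)
  rw [laplacian_add_log_norm_add_inv_norm hw hx]
  linarith

theorem le_add_log_norm_sub_of_laplacian_le (hn : 3 ≤ n) (hε : 0 ≤ ε) (hεc : ε * (n - 2) < c)
    (hw : ContDiffOn ℝ 2 w {0}ᶜ)
    (hΔ : ∀ x, x ≠ 0 → ‖x‖ < 1 → laplacian w x ≤ -c / ‖x‖ ^ 2)
    (hm : ∀ x, ‖x‖ ≤ 1 → m ≤ w x) {δ : ℝ} (hδ0 : 0 < δ) (hδ1 : δ < 1)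
    {x : EuclideanSpace ℝ (Fin n)} (hδx : δ < ‖x‖) (hx1 : ‖x‖ < 1) :
    m ≤ w x + ε * log ‖x‖ - ε * (δ * log δ) * ‖x‖ ^ (-1 : ℝ) := by
  -- `η` is chosen so that the barrier `ε log ‖y‖ + η / ‖y‖` vanishes on the sphere `‖y‖ = δ`
  set η := -(ε * (δ * log δ))
  have hη : 0 ≤ η := neg_nonneg.mpr <| mul_nonpos_of_nonneg_of_nonpos hε <|
    mul_nonpos_of_nonneg_of_nonpos hδ0.le (log_nonpos hδ0.le hδ1.le)
  set φ : EuclideanSpace ℝ (Fin n) → ℝ := fun y => w y + ε * log ‖y‖ + η * ‖y‖ ^ (-1 : ℝ)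
  set U : Set (EuclideanSpace ℝ (Fin n)) := {y | ‖y‖ ∈ Ioo δ 1}
  have hne : ∀ y ∈ closure U, y ≠ 0 := fun y hy h0 => by
    have := (closure_setOf_norm_mem_Ioo_subset hy).1
    simp only [h0, norm_zero] at this
    linarith
  have hwy : ∀ y ∈ closure U, ContDiffAt ℝ 2 w y := fun y hy =>
    hw.contDiffAt (isOpen_compl_singleton.mem_nhds (hne y hy))
  have hφ : ∀ y ∈ closure U, ContDiffAt ℝ 2 φ y := fun y hy =>
    have hnorm := contDiffAt_norm ℝ (hne y hy)
    have hy0 : ‖y‖ ≠ 0 := norm_ne_zero_iff.mpr (hne y hy)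
    ((hwy y hy).add (contDiffAt_const.mul (hnorm.log hy0))).add
      (contDiffAt_const.mul (hnorm.rpow_const_of_ne hy0))
  have hfr : ∀ y ∈ frontier U, m ≤ φ y := by
    intro y hy
    have hy1 : ‖y‖ ≤ 1 := (closure_setOf_norm_mem_Ioo_subset (frontier_subset_closure hy)).2
    rcases norm_eq_or_norm_eq_of_mem_frontier_setOf_norm_mem_Ioo hy with hδy | hy1
    · have hbarrier : ε * log δ + η * δ ^ (-1 : ℝ) = 0 := by
        rw [Real.rpow_neg_one]
        field_simp
        ring
      simp only [φ, hδy, add_assoc, hbarrier, add_zero]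
      exact hm y hy1
    · simp only [φ, hy1, log_one, Real.one_rpow]
      linarith [hm y hy1.le]
  have hbdd : Bornology.IsBounded U :=
    (Metric.isBounded_ball (x := (0 : EuclideanSpace ℝ (Fin n))) (r := 1)).subset
      fun y hy => mem_ball_zero_iff.mpr hy.2
  have := le_of_forall_frontier_le_of_laplacian_neg isOpen_setOf_norm_mem_Ioo hbdd
    (fun y hy => (hφ y hy).continuousAt.continuousWithinAt)
    (fun y hy => (hφ y (subset_closure hy)).contDiffWithinAt)
    (fun y hy => laplacian_add_log_norm_add_inv_norm_neg hn hεc hη (hwy y (subset_closure hy))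
      (hne y (subset_closure hy)) (hΔ y (hne y (subset_closure hy)) hy.2))
    hfr (subset_closure (show x ∈ U from ⟨hδx, hx1⟩))
  simp only [φ, η] at this
  linarith

theorem le_add_log_norm_of_laplacian_le (hn : 3 ≤ n) (hε : 0 ≤ ε) (hεc : ε * (n - 2) < c)
    (hw : ContDiffOn ℝ 2 w {0}ᶜ)
    (hΔ : ∀ x, x ≠ 0 → ‖x‖ < 1 → laplacian w x ≤ -c / ‖x‖ ^ 2)
    (hm : ∀ x, ‖x‖ ≤ 1 → m ≤ w x) {x : EuclideanSpace ℝ (Fin n)} (hx0 : x ≠ 0)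
    (hx1 : ‖x‖ < 1) : m ≤ w x + ε * log ‖x‖ := by
  have hlim : Tendsto (fun δ => w x + ε * log ‖x‖ - ε * (δ * log δ) * ‖x‖ ^ (-1 : ℝ)) (𝓝[>] 0)
      (𝓝 (w x + ε * log ‖x‖)) := by
    have h := ((continuous_mul_log.tendsto 0).const_mul ε).mul_const (‖x‖ ^ (-1 : ℝ))
    simpa using (h.const_sub (w x + ε * log ‖x‖)).mono_left nhdsWithin_le_nhds
  refine ge_of_tendsto hlim ?_
  filter_upwards [Ioo_mem_nhdsGT (norm_pos_iff.mpr hx0)] with δ hδ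
  exact le_add_log_norm_sub_of_laplacian_le hn hε hεc hw hΔ hm hδ.1 (hδ.2.trans hx1) hδ.2 hx1

theorem not_bddAbove_image_closedBall_of_laplacian_le (hn : 3 ≤ n) (hc : 0 < c)
    (hw : ContDiffOn ℝ 2 w {0}ᶜ)
    (hΔ : ∀ x, x ≠ 0 → ‖x‖ < 1 → laplacian w x ≤ -c / ‖x‖ ^ 2)
    (hm : ∀ x, ‖x‖ ≤ 1 → m ≤ w x) : ¬BddAbove (w '' closedBall 0 1) := by
  rintro ⟨M, hM⟩
  have hn2 : (0 : ℝ) < n - 2 := by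
    have : (3 : ℝ) ≤ n := by exact_mod_cast hn
    linarith
  set ε := c / (2 * (n - 2))
  have hε : 0 < ε := div_pos hc (by linarith)
  have hεc : ε * (n - 2) < c := by
    rw [div_mul_eq_mul_div, mul_comm 2, ← div_div, mul_div_cancel_right₀ _ hn2.ne']
    linarith
  obtain ⟨t, ⟨ht0, ht1⟩, hlog⟩ : ∃ t ∈ Ioo (0 : ℝ) 1, ε * log t < m - M :=
    ((Filter.eventually_of_mem (Ioo_mem_nhdsGT one_pos) fun _ h => h).and
      ((tendsto_log_nhdsGT_zero.const_mul_atBot hε).eventually_lt_atBot (m - M))).exists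
  have : Nonempty (Fin n) := ⟨⟨0, by omega⟩⟩
  obtain ⟨x, hx⟩ := exists_norm_eq (EuclideanSpace ℝ (Fin n)) ht0.le
  have hx0 : x ≠ 0 := norm_pos_iff.mp (hx ▸ ht0)
  have hlower := le_add_log_norm_of_laplacian_le hn hε.le hεc hw hΔ hm hx0 (hx ▸ ht1)
  have hupper := hM ⟨x, mem_closedBall_zero_iff.mpr (hx ▸ ht1.le), rfl⟩
  rw [hx] at hlower
  linarith

end Blowup

theorem no_superharmonic_supersolution_strong_singularity_general
    (n : ℕ) (hn : 3 ≤ n) (a p : ℝ) (ha2 : 2 ≤ a) (hp : 1 < p)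
    (u w : EuclideanSpace ℝ (Fin n) → ℝ)
    (hu : Continuous u) (hupos : ∀ x, ‖x‖ ≤ 1 → 0 < u x)
    (hwreg : ContDiffOn ℝ 2 w {(0 : EuclideanSpace ℝ (Fin n))}ᶜ)
    (hwc : Continuous w)
    (hwineq : ∀ x : EuclideanSpace ℝ (Fin n), x ≠ 0 → ‖x‖ ≤ 1 →
      u x ^ p / ‖x‖ ^ a ≤ -laplacian w x) :
    False := by
  have hball := isCompact_closedBall (0 : EuclideanSpace ℝ (Fin n)) 1
  obtain ⟨z, hz, hzmin⟩ := hball.exists_isMinOn (nonempty_closedBall.mpr zero_le_one)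
    (hu.rpow_const fun _ => Or.inr (by linarith)).continuousOn
  set c := u z ^ p
  have hc : 0 < c := rpow_pos_of_pos (hupos z (mem_closedBall_zero_iff.mp hz)) p
  have hΔ : ∀ x, x ≠ 0 → ‖x‖ < 1 → laplacian w x ≤ -c / ‖x‖ ^ 2 := fun x hx0 hx1 => by
    have hxpos : 0 < ‖x‖ := norm_pos_iff.mpr hx0
    have hpow : ‖x‖ ^ a ≤ ‖x‖ ^ 2 := by
      simpa using Real.rpow_le_rpow_of_exponent_ge hxpos hx1.le ha2
    have hcx : c / ‖x‖ ^ 2 ≤ u x ^ p / ‖x‖ ^ a :=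
      div_le_div₀ (rpow_pos_of_pos (hupos x hx1.le) p).le
        (hzmin (mem_closedBall_zero_iff.mpr hx1.le)) (by positivity) hpow
    rw [neg_div]
    linarith [hwineq x hx0 hx1.le]
  obtain ⟨m, hm⟩ := hball.bddBelow_image hwc.continuousOn
  exact not_bddAbove_image_closedBall_of_laplacian_le hn hc hwreg hΔ
    (fun x hx => hm ⟨x, mem_closedBall_zero_iff.mpr hx, rfl⟩)
    (hball.bddAbove_image hwc.continuousOn)

theorem no_superharmonic_supersolution_strong_singularity
    (n : ℕ) (hn : 3 ≤ n) (a p : ℝ) (ha2 : 2 ≤ a) (han : a < n) (hp : 1 < p)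
    (u w : EuclideanSpace ℝ (Fin n) → ℝ)
    (hu : Continuous u) (hupos : ∀ x, ‖x‖ ≤ 1 → 0 < u x)
    (hwreg : ContDiffOn ℝ 2 w {(0 : EuclideanSpace ℝ (Fin n))}ᶜ)
    (hwc : Continuous w)
    (hwineq : ∀ x : EuclideanSpace ℝ (Fin n), x ≠ 0 → ‖x‖ ≤ 1 →
      u x ^ p / ‖x‖ ^ a ≤ -laplacian w x)
    (hwsuper : ∀ x : EuclideanSpace ℝ (Fin n), x ≠ 0 → 0 ≤ -laplacian w x)
    (hwavg : ∀ r₁ r₂ : ℝ, 0 < r₁ → r₁ ≤ r₂ →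
      (⨍ ξ : sphere (0 : EuclideanSpace ℝ (Fin n)) 1,
        w (r₂ • (ξ : EuclideanSpace ℝ (Fin n)))
        ∂(volume : Measure (EuclideanSpace ℝ (Fin n))).toSphere) ≤
      ⨍ ξ : sphere (0 : EuclideanSpace ℝ (Fin n)) 1,
        w (r₁ • (ξ : EuclideanSpace ℝ (Fin n)))
        ∂(volume : Measure (EuclideanSpace ℝ (Fin n))).toSphere) :
    False :=
  no_superharmonic_supersolution_strong_singularity_general n hn a p ha2 hp u w hu hupos hwreg hwc
    hwineq
end
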